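/- For every real number x, the series ∑_{n≥1} μ(n)·B̄_1(nx)²/n² converges absolutely and ∑_{n≥1} μ(n)·B̄_1(nx)²/n² = (1/(2π²))·(1 + 2·cos(2πx)). -/

import Mathlib

/-- The periodized Bernoulli polynomial `B̄ₘ(x) = Bₘ({x})`. -/
noncomputable def bernPer (m : ℕ) (x : ℝ) : ℝ :=
  ((Polynomial.bernoulli m).map (algebraMap ℚ ℝ)).eval (Int.fract x)

/-!
The Fourier series of `B̄₂` gives `π² B̄₁(y)² = ∑_{k ≥ 1} (cos (2πky) + 1/2) / k²`. Substituting
`y = nx` and multiplying by `μ(n) / n²`, the series becomes a double sum over pairs `(n, k)` of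
`μ(n) f(nk)` with `f(m) = (cos (2πmx) + 1/2) / m²`; it converges absolutely, and grouping it by
`m = nk` leaves `∑_m (∑_{n ∣ m} μ(n)) f(m) = f(1)`.
-/

open Real ArithmeticFunction
open scoped ArithmeticFunction.Moebius

lemma bernPer_one_apply (y : ℝ) : bernPer 1 y = Int.fract y - 1 / 2 := by
  simp [bernPer, Polynomial.bernoulli, Finset.sum_range_succ, bernoulli_one]
  ring

lemma bernPer_one_sq_le (y : ℝ) : bernPer 1 y ^ 2 ≤ 1 / 4 := by
  rw [bernPer_one_apply]
  nlinarith [Int.fract_nonneg y, Int.fract_lt_one y]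

lemma eval_map_bernoulli_two (t : ℝ) :
    ((Polynomial.bernoulli 2).map (algebraMap ℚ ℝ)).eval t = (t - 1 / 2) ^ 2 - 1 / 12 := by
  simp [Polynomial.bernoulli, Finset.sum_range_succ, bernoulli_one,
    bernoulli_eq_bernoulli'_of_ne_one, bernoulli'_two]
  ring

lemma cos_two_pi_nat_mul_fract (n : ℕ) (y : ℝ) :
    cos (2 * π * n * Int.fract y) = cos (2 * π * n * y) := by
  rw [Int.fract, mul_sub, show 2 * π * n * (⌊y⌋ : ℝ) = ((n * ⌊y⌋ : ℤ) : ℝ) * (2 * π) by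
    push_cast; ring, cos_sub_int_mul_two_pi]

lemma hasSum_cos_div_sq (y : ℝ) :
    HasSum (fun k : ℕ+ => cos (2 * π * k * y) / (k : ℝ) ^ 2)
      (π ^ 2 * (bernPer 1 y ^ 2 - 1 / 12)) := by
  have h := hasSum_one_div_nat_pow_mul_cos one_ne_zero
    ⟨Int.fract_nonneg y, (Int.fract_lt_one y).le⟩
  simp only [cos_two_pi_nat_mul_fract, Nat.reduceMul, eval_map_bernoulli_two] at h
  refine (hasSum_pnat_iff (f := fun k : ℕ => cos (2 * π * k * y) / (k : ℝ) ^ 2)).mpr ?_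
  have hval : π ^ 2 * (bernPer 1 y ^ 2 - 1 / 12) + cos (2 * π * (0 : ℕ) * y) / ((0 : ℕ) : ℝ) ^ 2 =
      (-1) ^ (1 + 1) * (2 * π) ^ 2 / 2 / (Nat.factorial 2 : ℝ) *
        ((Int.fract y - 1 / 2) ^ 2 - 1 / 12) := by
    simp only [Nat.cast_zero, ne_eq, OfNat.ofNat_ne_zero, not_false_eq_true, zero_pow, div_zero,
      add_zero, bernPer_one_apply, Nat.factorial_two, Nat.cast_ofNat]
    ring
  rw [hval]
  exact h.congr_fun fun k => (one_div_mul_eq_div _ _).symm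

lemma hasSum_cos_add_half_div_sq (y : ℝ) :
    HasSum (fun k : ℕ+ => (cos (2 * π * k * y) + 1 / 2) / (k : ℝ) ^ 2)
      (π ^ 2 * bernPer 1 y ^ 2) := by
  have hζ : HasSum (fun k : ℕ+ => 1 / (k : ℝ) ^ 2) (π ^ 2 / 6) := by
    refine (hasSum_pnat_iff (f := fun k : ℕ => 1 / (k : ℝ) ^ 2)).mpr ?_
    simpa using hasSum_zeta_two
  convert (hasSum_cos_div_sq y).add (hζ.mul_left (1 / 2)) using 1
  · ext k; ring
  · ring

lemma sum_divisorsAntidiagonal_moebius (n : ℕ) :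
    ∑ p ∈ n.divisorsAntidiagonal, μ p.1 = if n = 1 then 1 else 0 := by
  rw [Nat.sum_divisorsAntidiagonal (fun a _ => μ a), ← coe_mul_zeta_apply, moebius_mul_coe_zeta,
    one_apply]

theorem hasSum_moebius_smul_mul {E : Type*} [NormedAddCommGroup E] [CompleteSpace E] {f : ℕ → E}
    (hf : Summable fun p : ℕ+ × ℕ+ => ‖f (p.1 * p.2)‖) :
    HasSum (fun p : ℕ+ × ℕ+ => μ p.1 • f (p.1 * p.2)) (f 1) := by
  set g := fun p : ℕ+ × ℕ+ => μ p.1 • f (p.1 * p.2)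
  have hμ (n : ℕ) : ‖μ n‖ ≤ 1 := by rw [Int.norm_eq_abs]; exact_mod_cast abs_moebius_le_one
  have hg : Summable g := hf.of_norm_bounded fun p =>
    (norm_zsmul_le _ _).trans (mul_le_of_le_one_left (norm_nonneg _) (hμ p.1))
  have hfiber : ∀ n : ℕ+, HasSum
      (fun c : (n : ℕ).divisorsAntidiagonal => g (sigmaAntidiagonalEquivProd ⟨n, c⟩))
      (if n = 1 then f 1 else 0) := by
    intro n
    convert hasSum_fintype (fun c : (n : ℕ).divisorsAntidiagonal =>
      g (sigmaAntidiagonalEquivProd ⟨n, c⟩)) using 1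
    change _ = ∑ c : (n : ℕ).divisorsAntidiagonal, μ c.1.1 • f (c.1.1 * c.1.2)
    rw [Finset.sum_coe_sort (n : ℕ).divisorsAntidiagonal (fun p => μ p.1 • f (p.1 * p.2)),
      Finset.sum_congr rfl fun p hp => by rw [(Nat.mem_divisorsAntidiagonal.mp hp).1],
      ← Finset.sum_smul, sum_divisorsAntidiagonal_moebius]
    by_cases hn : n = 1 <;> simp [hn]
  have h := (sigmaAntidiagonalEquivProd.hasSum_iff.mpr hg.hasSum).sigma hfiber
  rw [(hasSum_ite_eq 1 (f 1)).unique h]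
  exact hg.hasSum

lemma hasSum_moebius_mul_sq_bernPer_one_div_sq (x : ℝ) :
    HasSum (fun n : ℕ+ => (μ n : ℝ) * bernPer 1 (n * x) ^ 2 / (n : ℝ) ^ 2)
      (1 / (2 * π ^ 2) * (1 + 2 * cos (2 * π * x))) := by
  set f : ℕ → ℝ := fun m => (cos (2 * π * m * x) + 1 / 2) / (m : ℝ) ^ 2 with hf_def
  have hζ : Summable fun k : ℕ+ => 1 / (k : ℝ) ^ 2 :=
    (Real.summable_one_div_nat_pow.mpr one_lt_two).comp_injective PNat.coe_injective
  have hf : Summable fun p : ℕ+ × ℕ+ => ‖f (p.1 * p.2)‖ := by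
    refine .of_nonneg_of_le (fun _ => norm_nonneg _) (fun p => ?_)
      ((hζ.mul_of_nonneg hζ (fun _ => by positivity) (fun _ => by positivity)).mul_left (3 / 2))
    have hnum : |cos (2 * π * ((p.1 * p.2 : ℕ) : ℝ) * x) + 1 / 2| ≤ 3 / 2 := by
      have := abs_le.mp (abs_cos_le_one (2 * π * ((p.1 * p.2 : ℕ) : ℝ) * x))
      rw [abs_le]; constructor <;> linarith
    calc ‖f (p.1 * p.2)‖
        = |cos (2 * π * ((p.1 * p.2 : ℕ) : ℝ) * x) + 1 / 2| / ((p.1 * p.2 : ℕ) : ℝ) ^ 2 := by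
          simp only [hf_def, Real.norm_eq_abs, abs_div, abs_pow, Nat.abs_cast]
      _ ≤ 3 / 2 / ((p.1 * p.2 : ℕ) : ℝ) ^ 2 := by gcongr
      _ = 3 / 2 * (1 / (p.1 : ℝ) ^ 2 * (1 / (p.2 : ℝ) ^ 2)) := by push_cast; ring
  have hinner : ∀ n : ℕ+, HasSum (fun k : ℕ+ => μ n • f (n * k))
      ((μ n : ℝ) * (π ^ 2 * bernPer 1 (n * x) ^ 2) / (n : ℝ) ^ 2) := by
    intro n
    rw [mul_div_right_comm]
    refine ((hasSum_cos_add_half_div_sq (n * x)).mul_left ((μ n : ℝ) / (n : ℝ) ^ 2)).congr_fun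
      fun k => ?_
    simp only [hf_def, zsmul_eq_mul]
    push_cast
    rw [show 2 * π * ((n : ℝ) * k) * x = 2 * π * k * (n * x) by ring]
    ring
  have h := (hasSum_moebius_smul_mul hf).prod_fiberwise hinner
  rw [show 1 / (2 * π ^ 2) * (1 + 2 * cos (2 * π * x)) = f 1 / π ^ 2 by
    simp only [hf_def, Nat.cast_one, mul_one, one_pow, div_one]; field_simp; ring]
  refine (h.div_const (π ^ 2)).congr_fun fun n => ?_
  field_simp

lemma abs_moebius_mul_bernPer_one_sq_div_sq_le (n : ℕ) (y : ℝ) :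
    |(μ n : ℝ) * bernPer 1 y ^ 2 / (n : ℝ) ^ 2| ≤ 1 / (n : ℝ) ^ 2 := by
  have hμ : |(μ n : ℝ)| ≤ 1 := by exact_mod_cast abs_moebius_le_one
  rw [abs_div, abs_mul, abs_sq, abs_of_nonneg (sq_nonneg (n : ℝ))]
  gcongr
  exact mul_le_one₀ hμ (sq_nonneg _) ((bernPer_one_sq_le y).trans (by norm_num))

theorem stmt6 (x : ℝ) :
    (Summable fun n : ℕ =>
      |(ArithmeticFunction.moebius (n + 1) : ℝ) * bernPer 1 ((n + 1) * x) ^ 2 / (n + 1) ^ 2|) ∧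
    ∑' n : ℕ, (ArithmeticFunction.moebius (n + 1) : ℝ) * bernPer 1 ((n + 1) * x) ^ 2 / (n + 1) ^ 2
      = 1 / (2 * Real.pi ^ 2) * (1 + 2 * Real.cos (2 * Real.pi * x)) := by
  have hsum := (hasSum_pnat_iff_hasSum_succ
    (f := fun m : ℕ => (μ m : ℝ) * bernPer 1 (m * x) ^ 2 / (m : ℝ) ^ 2)).mp
    (hasSum_moebius_mul_sq_bernPer_one_div_sq x)
  push_cast at hsum
  refine ⟨?_, hsum.tsum_eq⟩
  have hζ : Summable fun n : ℕ => 1 / ((n : ℝ) + 1) ^ 2 := by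
    exact_mod_cast (summable_nat_add_iff 1).mpr (Real.summable_one_div_nat_pow.mpr one_lt_two)
  refine hζ.of_nonneg_of_le (fun _ => abs_nonneg _) fun n => ?_
  exact_mod_cast abs_moebius_mul_bernPer_one_sq_div_sq_le (n + 1) ((n + 1) * x)
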